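/- arXiv:1805.02192 — 9 statements merged into one kernel-verified Lean document; each statement's English description precedes it below -/
import Mathlib

section
/- Let G be a finite bipartite graph with parts A and B that has no isolated vertices, satisfies |A| ≤ |B|, and is well-spread with parameter λ = |A|/n where n = |A| + |B| (that is, |S|·|B| ≤ |N(S)|·|A| for every S ⊆ A, where N(S) ⊆ B is the neighborhood of S). Define the payoff p : A ∪ B → ℝ by p(a) = 1 − λ for a ∈ A and p(b) = λ for b ∈ B. Then p(u) + p(v) ≥ 1 for every edge uv of G, and for every independent set L ⊆ A ∪ B one has p(L) = ∑_{v∈L} p(v) ≤ n/4. -/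
/-!
Write `a = |A|`, `b = |B|` and `n = a + b`, so that `p = b/n` on `A` and `p = a/n` on `B`.
An independent set `L` splits into `S = L ∩ A` and `T = L ∩ B`, and `T` misses `N(S)`, so
`|T| ≤ b - |N(S)|`. Well-spreadedness `|S| b ≤ |N(S)| a` then gives
`n · p(L) = |S| b + |T| a ≤ |S| b + (b - |N(S)|) a ≤ a b ≤ n² / 4`.
-/

open Finset

lemma Finset.sum_ite_mem_eq_card_smul {ι M : Type*} [DecidableEq ι] [AddCommMonoid M]
    (L A : Finset ι) (x y : M) :
    ∑ v ∈ L, (if v ∈ A then x else y) = #(L ∩ A) • x + #(L \ A) • y := by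
  rw [sum_ite, filter_mem_eq_inter, filter_notMem_eq_sdiff, sum_const, sum_const]

lemma mul_one_sub_div_add_mul_div_le_div_four {a b s t : ℝ} (ha : 0 ≤ a) (hb : 0 ≤ b)
    (hs : s ≤ a) (h : s * b + t * a ≤ a * b) :
    s * (1 - a / (a + b)) + t * (a / (a + b)) ≤ (a + b) / 4 := by
  rcases (add_nonneg ha hb).eq_or_lt with hn | hn
  · have ha0 : a = 0 := by linarith
    simp only [← hn, div_zero, mul_zero, sub_zero, mul_one, add_zero]
    linarith
  · have hb' : 1 - a / (a + b) = b / (a + b) := by field_simp; ring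
    rw [hb', ← mul_div_assoc, ← mul_div_assoc, ← add_div, div_le_div_iff₀ hn (by norm_num)]
    nlinarith [sq_nonneg (a - b)]

namespace SimpleGraph

variable {V : Type*} (G : SimpleGraph V) [DecidableRel G.Adj]

def neighborsIn (S B : Finset V) : Finset V := B.filter fun b => ∃ a ∈ S, G.Adj a b

variable {G}

lemma IsIndepSet.disjoint_neighborsIn {L S T : Finset V} (hL : G.IsIndepSet (L : Set V))
    (hS : S ⊆ L) (hT : T ⊆ L) (B : Finset V) : Disjoint T (G.neighborsIn S B) := by
  refine Finset.disjoint_left.mpr fun b hb hbN => ?_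
  obtain ⟨a, ha, hab⟩ := (mem_filter.mp hbN).2
  exact hL (hS ha) (hT hb) hab.ne hab

lemma IsIndepSet.card_mul_add_card_mul_le [DecidableEq V] {L S T A B : Finset V}
    (hL : G.IsIndepSet (L : Set V)) (hS : S ⊆ L) (hT : T ⊆ L) (hTB : T ⊆ B)
    (hws : #S * #B ≤ #(G.neighborsIn S B) * #A) :
    #S * #B + #T * #A ≤ #A * #B := by
  have hTN : #T + #(G.neighborsIn S B) ≤ #B := by
    rw [← card_union_of_disjoint (hL.disjoint_neighborsIn hS hT B)]
    exact card_le_card (union_subset hTB (filter_subset _ _))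
  nlinarith [Nat.mul_le_mul_right #A hTN]

end SimpleGraph

theorem wellSpread_payoff_general {V : Type*} [Fintype V] [DecidableEq V]
    (G : SimpleGraph V) [DecidableRel G.Adj]
    (A B : Finset V) (hdisj : Disjoint A B) (hcover : A ∪ B = Finset.univ)
    (hbip : ∀ u v : V, G.Adj u v → (u ∈ A ∧ v ∈ B) ∨ (u ∈ B ∧ v ∈ A))
    (hws : ∀ S ⊆ A, S.card * B.card ≤ (B.filter (fun b => ∃ a ∈ S, G.Adj a b)).card * A.card)
    (n : ℕ) (hn : n = A.card + B.card)
    (lam : ℝ) (hlam : lam = (A.card : ℝ) / n)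
    (p : V → ℝ) (hp : ∀ v : V, p v = if v ∈ A then 1 - lam else lam) :
    (∀ u v : V, G.Adj u v → 1 ≤ p u + p v) ∧
    (∀ L : Finset V, (∀ u ∈ L, ∀ v ∈ L, ¬ G.Adj u v) → ∑ v ∈ L, p v ≤ (n : ℝ) / 4) := by
  refine ⟨fun u v huv => ?_, fun L hL => ?_⟩
  · rcases hbip u v huv with ⟨hu, hv⟩ | ⟨hu, hv⟩
    · simp [hp, hu, disjoint_right.mp hdisj hv]
    · simp [hp, hv, disjoint_right.mp hdisj hu]
  · have hLB : L \ A ⊆ B := fun v hv =>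
      (mem_union.mp (hcover ▸ mem_univ v)).resolve_left (mem_sdiff.mp hv).2
    have hcard := SimpleGraph.IsIndepSet.card_mul_add_card_mul_le
      (fun u hu v hv _ => hL u hu v hv) inter_subset_left sdiff_subset hLB
      (hws (L ∩ A) inter_subset_right)
    rw [sum_congr rfl fun v _ => hp v, sum_ite_mem_eq_card_smul, nsmul_eq_mul, nsmul_eq_mul,
      hlam, hn, Nat.cast_add]
    exact mul_one_sub_div_add_mul_div_le_div_four (Nat.cast_nonneg _) (Nat.cast_nonneg _)
      (by exact_mod_cast card_le_card inter_subset_right) (by exact_mod_cast hcard)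

/-- A well-spread bipartite graph with the (1-λ, λ) payoff satisfies all
edges and every independent set has payoff at most n/4. -/
theorem wellSpread_payoff {V : Type*} [Fintype V] [DecidableEq V]
    (G : SimpleGraph V) [DecidableRel G.Adj]
    (A B : Finset V) (hdisj : Disjoint A B) (hcover : A ∪ B = Finset.univ)
    (hbip : ∀ u v : V, G.Adj u v → (u ∈ A ∧ v ∈ B) ∨ (u ∈ B ∧ v ∈ A))
    (hiso : ∀ v : V, ∃ u : V, G.Adj u v)
    (hcard : A.card ≤ B.card)
    (hws : ∀ S ⊆ A, S.card * B.card ≤ (B.filter (fun b => ∃ a ∈ S, G.Adj a b)).card * A.card)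
    (n : ℕ) (hn : n = A.card + B.card)
    (lam : ℝ) (hlam : lam = (A.card : ℝ) / n)
    (p : V → ℝ) (hp : ∀ v : V, p v = if v ∈ A then 1 - lam else lam) :
    (∀ u v : V, G.Adj u v → 1 ≤ p u + p v) ∧
    (∀ L : Finset V, (∀ u ∈ L, ∀ v ∈ L, ¬ G.Adj u v) → ∑ v ∈ L, p v ≤ (n : ℝ) / 4) :=
  wellSpread_payoff_general G A B hdisj hcover hbip hws n hn lam hlam p hp
end

section
/- Let G be a finite bipartite graph with parts A and B of total order n = |A| + |B|, without isolated vertices, such that there exists a matching of G saturating A. Then there exists a payoff vector p : A ∪ B → ℝ with p ≥ 0, p(u) + p(v) ≥ 1 for every edge uv of G, p(a) ≥ 1/2 for every a ∈ A, and ∑_{v∈L} p(v) ≤ n/4 for every independent set L ⊆ A ∪ B. -/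
/-! The payoff is an optimal strategy in a zero-sum game: one player picks `p` among the
fractional vertex covers with `p ≥ 1/2` on `A`, the other a probability distribution `μ` on
independent sets, and the first pays `E_μ[p(L)]`. By the minimax theorem it suffices to answer
each `μ`. Its vertex marginals `w` satisfy `w u + w v ≤ 1` on edges, and the cover equal to
`max (1/2) (1 - w)` on `A` and `min (1/2) (1 - w)` on `B` earns `w a p a + w b p b ≤ 1/2` on each
edge `ab` of the matching and `w b p b ≤ 1/4` at every other `b ∈ B`. Summing along the matching
bounds the expected payoff by `|A|/2 + (|B| - |A|)/4 = n/4`. -/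

open Finset Matrix

theorem exists_forall_le_of_forall_exists_le {E F : Type*}
    [AddCommGroup E] [Module ℝ E] [TopologicalSpace E] [IsTopologicalAddGroup E]
    [ContinuousSMul ℝ E] [AddCommGroup F] [Module ℝ F] [TopologicalSpace F]
    [IsTopologicalAddGroup F] [ContinuousSMul ℝ F]
    {X : Set E} {Y : Set F} (hXne : X.Nonempty) (hXc : Convex ℝ X) (hXk : IsCompact X)
    (hYne : Y.Nonempty) (hYc : Convex ℝ Y) (hYk : IsCompact Y)
    (β : E →ₗ[ℝ] F →ₗ[ℝ] ℝ) (hβl : ∀ y, Continuous (β.flip y))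
    (hβr : ∀ x, Continuous (β x)) {c : ℝ} (h : ∀ y ∈ Y, ∃ x ∈ X, β x y ≤ c) :
    ∃ x ∈ X, ∀ y ∈ Y, β x y ≤ c := by
  obtain ⟨a, ha, b, hb, hab⟩ := Sion.exists_isSaddlePointOn (f := fun x y => β x y)
    hXne hXc hXk (fun y _ => (hβl y).lowerSemicontinuous.lowerSemicontinuousOn _)
    (fun y _ => ((β.flip y).convexOn hXc).quasiconvexOn) hYc hYne hYk
    (fun x _ => (hβr x).upperSemicontinuous.upperSemicontinuousOn _)
    (fun x _ => ((β x).concaveOn hYc).quasiconcaveOn)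
  obtain ⟨x, hx, hxc⟩ := h b hb
  exact ⟨a, ha, fun y hy => (hab x hx y hy).trans hxc⟩

theorem mul_max_half_add_mul_min_half_le {x y : ℝ} (h : x + y ≤ 1) :
    x * max (1 / 2) (1 - x) + y * min (1 / 2) (1 - y) ≤ 1 / 2 := by
  rcases le_total x (1 / 2) with hx | hx
  · rw [max_eq_right (by linarith)]
    rcases le_total y (1 / 2) with hy | hy
    · rw [min_eq_left (by linarith)]; nlinarith [sq_nonneg (x - 1 / 2)]
    · rw [min_eq_right (by linarith)]; nlinarith [sq_nonneg (x - 1 / 2), sq_nonneg (y - 1 / 2)]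
  · rw [max_eq_left (by linarith), min_eq_left (by linarith)]; linarith

theorem mul_min_half_le (y : ℝ) : y * min (1 / 2) (1 - y) ≤ 1 / 4 := by
  rcases le_total y (1 / 2) with hy | hy
  · rw [min_eq_left (by linarith)]; linarith
  · rw [min_eq_right (by linarith)]; nlinarith [sq_nonneg (y - 1 / 2)]

theorem one_le_max_half_add_min_half {x y : ℝ} (h : x + y ≤ 1) :
    1 ≤ max (1 / 2) (1 - x) + min (1 / 2) (1 - y) := by
  rcases le_total y (1 / 2) with hy | hy
  · rw [min_eq_left (by linarith)]; linarith [le_max_left (1 / 2 : ℝ) (1 - x)]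
  · rw [min_eq_right (by linarith)]; linarith [le_max_right (1 / 2 : ℝ) (1 - x)]

theorem sum_union_le_of_injOn {V : Type*} [DecidableEq V] {A B : Finset V}
    (hdisj : Disjoint A B) {f : V → V} (hf : Set.InjOn f A) (hfB : ∀ a ∈ A, f a ∈ B)
    {g : V → ℝ} {c : ℝ} (hpair : ∀ a ∈ A, g a + g (f a) ≤ 2 * c) (hsingle : ∀ b ∈ B, g b ≤ c) :
    ∑ v ∈ A ∪ B, g v ≤ (#A + #B) * c := by
  have himg : A.image f ⊆ B := fun b hb => by
    obtain ⟨a, ha, rfl⟩ := mem_image.mp hb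
    exact hfB a ha
  have hcard : (#(B \ A.image f) : ℝ) + #A = #B := by
    rw [← card_image_of_injOn hf]; exact_mod_cast card_sdiff_add_card_eq_card himg
  have hsplit : ∑ v ∈ A ∪ B, g v = ∑ a ∈ A, (g a + g (f a)) + ∑ b ∈ B \ A.image f, g b := by
    rw [sum_union hdisj, sum_add_distrib, ← sum_image fun x hx y hy h => hf hx hy h,
      ← sum_sdiff himg]
    ring
  have hA : ∑ a ∈ A, (g a + g (f a)) ≤ #A * (2 * c) := by
    simpa using sum_le_sum hpair
  have hB : ∑ b ∈ B \ A.image f, g b ≤ #(B \ A.image f) * c := by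
    simpa using sum_le_sum fun b hb => hsingle b (mem_sdiff.mp hb).1
  rw [hsplit, ← hcard]
  linarith

section Payoff

variable {V : Type*}

def feasiblePayoffs (G : SimpleGraph V) (A : Finset V) : Set (V → ℝ) :=
  {p | (∀ v, p v ∈ Set.Icc 0 1) ∧ (∀ u v, G.Adj u v → 1 ≤ p u + p v) ∧ ∀ a ∈ A, 1 / 2 ≤ p a}

theorem convex_feasiblePayoffs (G : SimpleGraph V) (A : Finset V) :
    Convex ℝ (feasiblePayoffs G A) := by
  rintro p ⟨hp01, hpG, hpA⟩ q ⟨hq01, hqG, hqA⟩ s t hs ht hst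
  refine ⟨fun v => ⟨?_, ?_⟩, fun u v huv => ?_, fun a ha => ?_⟩ <;>
    simp only [Pi.add_apply, Pi.smul_apply, smul_eq_mul]
  · nlinarith [(hp01 v).1, (hq01 v).1]
  · nlinarith [(hp01 v).2, (hq01 v).2]
  · nlinarith [hpG u v huv, hqG u v huv]
  · nlinarith [hpA a ha, hqA a ha]

theorem isClosed_feasiblePayoffs (G : SimpleGraph V) (A : Finset V) :
    IsClosed (feasiblePayoffs G A) := by
  simp only [feasiblePayoffs, Set.ofPred_and, Set.ofPred_forall]
  refine .inter (isClosed_iInter fun v => isClosed_Icc.preimage (continuous_apply v))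
    (.inter (isClosed_iInter fun u => isClosed_iInter fun v => isClosed_iInter fun _ => ?_)
      (isClosed_iInter fun a => isClosed_iInter fun _ => ?_))
  · exact isClosed_le continuous_const ((continuous_apply u).add (continuous_apply v))
  · exact isClosed_le continuous_const (continuous_apply a)

theorem isCompact_feasiblePayoffs [Finite V] (G : SimpleGraph V) (A : Finset V) :
    IsCompact (feasiblePayoffs G A) :=
  (isCompact_univ_pi fun _ => isCompact_Icc).of_isClosed_subset (isClosed_feasiblePayoffs G A)
    fun _ hp v _ => hp.1 v

theorem one_mem_feasiblePayoffs (G : SimpleGraph V) (A : Finset V) :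
    1 ∈ feasiblePayoffs G A :=
  ⟨fun _ => by simp, fun _ _ _ => by norm_num, fun _ _ => by norm_num⟩

variable [DecidableEq V]

noncomputable def responsePayoff (A : Finset V) (w : V → ℝ) (v : V) : ℝ :=
  if v ∈ A then max (1 / 2) (1 - w v) else min (1 / 2) (1 - w v)

theorem responsePayoff_mem_feasiblePayoffs {G : SimpleGraph V} {A B : Finset V}
    (hdisj : Disjoint A B) (hbip : ∀ u v, G.Adj u v → (u ∈ A ∧ v ∈ B) ∨ (u ∈ B ∧ v ∈ A))
    {w : V → ℝ} (hw : ∀ v, w v ∈ Set.Icc 0 1) (hwG : ∀ u v, G.Adj u v → w u + w v ≤ 1) :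
    responsePayoff A w ∈ feasiblePayoffs G A := by
  have hcover : ∀ a b, a ∈ A → b ∈ B → G.Adj a b →
      1 ≤ responsePayoff A w a + responsePayoff A w b := fun a b ha hb hab => by
    simpa [responsePayoff, ha, Finset.disjoint_right.mp hdisj hb]
      using one_le_max_half_add_min_half (hwG a b hab)
  refine ⟨fun v => ?_, fun u v huv => ?_, fun a ha => ?_⟩
  · unfold responsePayoff
    split_ifs
    · exact ⟨by positivity, max_le (by norm_num) (by linarith [(hw v).1])⟩
    · exact ⟨le_min (by norm_num) (by linarith [(hw v).2]), (min_le_left _ _).trans (by norm_num)⟩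
  · rcases hbip u v huv with ⟨hu, hv⟩ | ⟨hu, hv⟩
    · exact hcover u v hu hv huv
    · linarith [hcover v u hv hu huv.symm]
  · simp [responsePayoff, ha]

theorem responsePayoff_dotProduct_le [Fintype V] {A B : Finset V} (hdisj : Disjoint A B)
    (hcover : A ∪ B = univ) {f : V → V} (hf : Set.InjOn f A) (hfB : ∀ a ∈ A, f a ∈ B)
    {w : V → ℝ} (hw : ∀ a ∈ A, w a + w (f a) ≤ 1) :
    responsePayoff A w ⬝ᵥ w ≤ (#A + #B) / 4 := by
  have hB : ∀ b ∈ B, responsePayoff A w b * w b = w b * min (1 / 2) (1 - w b) := fun b hb => by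
    simp [responsePayoff, Finset.disjoint_right.mp hdisj hb, mul_comm]
  rw [dotProduct, ← hcover, div_eq_mul_one_div]
  refine sum_union_le_of_injOn hdisj hf hfB (fun a ha => ?_) fun b hb => ?_
  · rw [hB (f a) (hfB a ha)]
    have hpair := mul_max_half_add_mul_min_half_le (hw a ha)
    simp only [responsePayoff, ha, if_true]
    linarith
  · rw [hB b hb]
    exact mul_min_half_le (w b)

end Payoff

section Incidence

variable {V ι : Type*} [DecidableEq V] [Fintype ι]

def incidenceMatrix (s : ι → Finset V) : Matrix V ι ℝ :=
  of fun v i => if v ∈ s i then 1 else 0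

theorem incidenceMatrix_mulVec_apply (s : ι → Finset V) (μ : ι → ℝ) (v : V) :
    (incidenceMatrix s *ᵥ μ) v = ∑ i with v ∈ s i, μ i := by
  simp [incidenceMatrix, mulVec, dotProduct, sum_filter]

theorem incidenceMatrix_mulVec_mem_Icc (s : ι → Finset V) {μ : ι → ℝ}
    (hμ : μ ∈ stdSimplex ℝ ι) (v : V) : (incidenceMatrix s *ᵥ μ) v ∈ Set.Icc 0 1 := by
  rw [incidenceMatrix_mulVec_apply, ← hμ.2]
  exact ⟨sum_nonneg fun i _ => hμ.1 i,
    sum_le_sum_of_subset_of_nonneg (filter_subset _ _) fun i _ _ => hμ.1 i⟩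

theorem incidenceMatrix_mulVec_add_le_one (s : ι → Finset V) {μ : ι → ℝ}
    (hμ : μ ∈ stdSimplex ℝ ι) {u v : V} (huv : ∀ i, u ∈ s i → v ∉ s i) :
    (incidenceMatrix s *ᵥ μ) u + (incidenceMatrix s *ᵥ μ) v ≤ 1 := by
  classical
  rw [incidenceMatrix_mulVec_apply, incidenceMatrix_mulVec_apply, ← hμ.2,
    ← sum_union (disjoint_filter.mpr fun i _ => huv i)]
  exact sum_le_sum_of_subset_of_nonneg (subset_univ _) fun i _ _ => hμ.1 i

theorem dotProduct_incidenceMatrix_mulVec_single [Fintype V] [DecidableEq ι] (s : ι → Finset V)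
    (p : V → ℝ) (i : ι) : p ⬝ᵥ (incidenceMatrix s *ᵥ Pi.single i 1) = ∑ v ∈ s i, p v := by
  simp [incidenceMatrix, dotProduct]

end Incidence

theorem bipartite_payoff_exists_general {V : Type*} [Fintype V] [DecidableEq V]
    (G : SimpleGraph V)
    (A B : Finset V) (hdisj : Disjoint A B) (hcover : A ∪ B = Finset.univ)
    (hbip : ∀ u v : V, G.Adj u v → (u ∈ A ∧ v ∈ B) ∨ (u ∈ B ∧ v ∈ A))
    (hmatch : ∃ f : V → V, Set.InjOn f (A : Set V) ∧ ∀ a ∈ A, f a ∈ B ∧ G.Adj a (f a))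
    (n : ℕ) (hn : n = A.card + B.card) :
    ∃ p : V → ℝ,
      (∀ v : V, 0 ≤ p v) ∧
      (∀ u v : V, G.Adj u v → 1 ≤ p u + p v) ∧
      (∀ a ∈ A, (1 : ℝ) / 2 ≤ p a) ∧
      (∀ L : Finset V, (∀ u ∈ L, ∀ v ∈ L, ¬ G.Adj u v) → ∑ v ∈ L, p v ≤ (n : ℝ) / 4) := by
  classical
  obtain ⟨f, hf, hfB⟩ := hmatch
  let ι := {L : Finset V // ∀ u ∈ L, ∀ v ∈ L, ¬ G.Adj u v}
  let M := incidenceMatrix fun L : ι => L.1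
  have hedge : ∀ μ ∈ stdSimplex ℝ ι, ∀ u v, G.Adj u v → (M *ᵥ μ) u + (M *ᵥ μ) v ≤ 1 :=
    fun μ hμ u v huv => incidenceMatrix_mulVec_add_le_one _ hμ fun L hu hv => L.2 u hu v hv huv
  have hresponse : ∀ μ ∈ stdSimplex ℝ ι,
      ∃ p ∈ feasiblePayoffs G A, toLinearMap₂' ℝ M p μ ≤ n / 4 := fun μ hμ => by
    refine ⟨responsePayoff A (M *ᵥ μ), responsePayoff_mem_feasiblePayoffs hdisj hbip
      (incidenceMatrix_mulVec_mem_Icc _ hμ) (hedge μ hμ), ?_⟩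
    rw [toLinearMap₂'_apply', hn, Nat.cast_add]
    exact responsePayoff_dotProduct_le hdisj hcover hf (fun a ha => (hfB a ha).1)
      fun a ha => hedge μ hμ a (f a) (hfB a ha).2
  obtain ⟨p, ⟨hp01, hpG, hpA⟩, hpμ⟩ := exists_forall_le_of_forall_exists_le
    ⟨1, one_mem_feasiblePayoffs G A⟩ (convex_feasiblePayoffs G A) (isCompact_feasiblePayoffs G A)
    ⟨_, single_mem_stdSimplex ℝ ⟨∅, by simp⟩⟩ (convex_stdSimplex ℝ ι) (isCompact_stdSimplex ℝ ι)
    (toLinearMap₂' ℝ M) (fun _ => LinearMap.continuous_of_finiteDimensional (F' := ℝ) _)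
    (fun _ => LinearMap.continuous_of_finiteDimensional (F' := ℝ) _) hresponse
  refine ⟨p, fun v => (hp01 v).1, hpG, hpA, fun L hL => ?_⟩
  simpa only [toLinearMap₂'_apply', M, dotProduct_incidenceMatrix_mulVec_single] using
    hpμ _ (single_mem_stdSimplex ℝ ⟨L, hL⟩)

/-- For a bipartite graph without isolated vertices in which A can be matched
into B, there is a feasible payoff with p ≥ 1/2 on A whose value on every independent set
is at most n/4. -/
theorem bipartite_payoff_exists {V : Type*} [Fintype V] [DecidableEq V]
    (G : SimpleGraph V)
    (A B : Finset V) (hdisj : Disjoint A B) (hcover : A ∪ B = Finset.univ)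
    (hbip : ∀ u v : V, G.Adj u v → (u ∈ A ∧ v ∈ B) ∨ (u ∈ B ∧ v ∈ A))
    (hiso : ∀ v : V, ∃ u : V, G.Adj u v)
    (hmatch : ∃ f : V → V, Set.InjOn f (A : Set V) ∧ ∀ a ∈ A, f a ∈ B ∧ G.Adj a (f a))
    (n : ℕ) (hn : n = A.card + B.card) :
    ∃ p : V → ℝ,
      (∀ v : V, 0 ≤ p v) ∧
      (∀ u v : V, G.Adj u v → 1 ≤ p u + p v) ∧
      (∀ a ∈ A, (1 : ℝ) / 2 ≤ p a) ∧
      (∀ L : Finset V, (∀ u ∈ L, ∀ v ∈ L, ¬ G.Adj u v) → ∑ v ∈ L, p v ≤ (n : ℝ) / 4) :=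
  bipartite_payoff_exists_general G A B hdisj hcover hbip hmatch n hn
end

section
/- Let G = (V, E) be any finite simple graph on n = |V| vertices. Then there exists a payoff vector p : V → ℝ with p ≥ 0 and p(u) + p(v) ≥ 1 for every edge uv ∈ E, such that ∑_{v∈L} p(v) ≤ n/4 for every independent set L ⊆ V. (In other words, the critical threshold value of the graphic simple game on G satisfies α_G ≤ n/4.) -/
/-!
Let `a` be the point of the fractional independent set polytope
`K = {x ∈ [0,1]^V | x u + x v ≤ 1 for every edge uv}` nearest to the all-ones vector `𝟙`, and
take `p = 𝟙 - a`; the constraints defining `K` are exactly what makes `p` feasible. The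
variational inequality of the projection, `⟪𝟙 - a, x - a⟫ ≤ 0`, applied to the indicator `x` of an
independent set `L` gives `p(L) = ⟪𝟙 - a, x⟫ ≤ ⟪𝟙 - a, a⟫ = ∑ (1 - a v) a v ≤ n / 4`.
-/

open RealInnerProductSpace

theorem exists_mem_forall_inner_sub_le_zero {F : Type*} [NormedAddCommGroup F]
    [InnerProductSpace ℝ F] {K : Set F} (hne : K.Nonempty) (hcomplete : IsComplete K)
    (hconvex : Convex ℝ K) (u : F) : ∃ a ∈ K, ∀ x ∈ K, ⟪u - a, x - a⟫ ≤ 0 := by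
  obtain ⟨a, ha, hmin⟩ := exists_norm_eq_iInf_of_complete_convex hne hcomplete hconvex u
  exact ⟨a, ha, (norm_eq_iInf_iff_real_inner_le_zero hconvex ha).1 hmin⟩

theorem EuclideanSpace.real_inner_eq_sum {ι : Type*} [Fintype ι] (x y : EuclideanSpace ℝ ι) :
    ⟪x, y⟫ = ∑ i, x i * y i := by
  simp [PiLp.inner_apply, mul_comm]

namespace SimpleGraph

variable {V : Type*} (G : SimpleGraph V)

def fractionalIndepSets : Set (EuclideanSpace ℝ V) :=
  {x | (∀ v, x v ∈ Set.Icc 0 1) ∧ ∀ u v, G.Adj u v → x u + x v ≤ 1}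

theorem zero_mem_fractionalIndepSets : 0 ∈ G.fractionalIndepSets :=
  ⟨fun _ => by simp, fun _ _ _ => by simp⟩

theorem convex_fractionalIndepSets : Convex ℝ G.fractionalIndepSets := by
  rintro x ⟨hx01, hxG⟩ y ⟨hy01, hyG⟩ s t hs ht hst
  refine ⟨fun v => ?_, fun u v huv => ?_⟩
  · obtain ⟨hx0, hx1⟩ := hx01 v
    obtain ⟨hy0, hy1⟩ := hy01 v
    simp only [PiLp.add_apply, PiLp.smul_apply, smul_eq_mul, Set.mem_Icc]
    constructor <;> nlinarith
  · have := hxG u v huv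
    have := hyG u v huv
    simp only [PiLp.add_apply, PiLp.smul_apply, smul_eq_mul]
    nlinarith

theorem isClosed_fractionalIndepSets : IsClosed G.fractionalIndepSets := by
  simp only [fractionalIndepSets, Set.ofPred_and, Set.ofPred_forall]
  refine .inter ?_ ?_
  · exact isClosed_iInter fun v => isClosed_Icc.preimage (by fun_prop)
  · exact isClosed_iInter fun u => isClosed_iInter fun v => isClosed_iInter fun _ =>
      isClosed_le (by fun_prop) continuous_const

theorem indicator_mem_fractionalIndepSets [DecidableEq V] {L : Finset V}
    (hL : ∀ u ∈ L, ∀ v ∈ L, ¬ G.Adj u v) :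
    WithLp.toLp 2 (fun v => if v ∈ L then 1 else 0) ∈ G.fractionalIndepSets := by
  refine ⟨fun v => by by_cases hv : v ∈ L <;> simp [hv], fun u v huv => ?_⟩
  by_cases hu : u ∈ L <;> by_cases hv : v ∈ L <;> simp [hu, hv]
  exact (hL u hu v hv huv).elim

end SimpleGraph

theorem sum_mul_one_sub_le_card_div_four {ι : Type*} [Fintype ι] (a : ι → ℝ) :
    ∑ i, (1 - a i) * a i ≤ Fintype.card ι / 4 := by
  calc ∑ i, (1 - a i) * a i ≤ ∑ _i : ι, (1 / 4 : ℝ) :=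
        Finset.sum_le_sum fun i _ => by nlinarith [sq_nonneg (a i - 1 / 2)]
    _ = Fintype.card ι / 4 := by simp [div_eq_mul_inv]

/-- For every finite simple graph G on n vertices there is a feasible payoff
whose value on every independent set is at most n/4, i.e. α_G ≤ n/4. -/
theorem graphic_alpha_le_quarter {V : Type*} [Fintype V] (G : SimpleGraph V) :
    ∃ p : V → ℝ,
      (∀ v : V, 0 ≤ p v) ∧
      (∀ u v : V, G.Adj u v → 1 ≤ p u + p v) ∧
      (∀ L : Finset V, (∀ u ∈ L, ∀ v ∈ L, ¬ G.Adj u v) →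
        ∑ v ∈ L, p v ≤ (Fintype.card V : ℝ) / 4) := by
  classical
  set one : EuclideanSpace ℝ V := WithLp.toLp 2 fun _ => 1
  obtain ⟨a, ha, hproj⟩ := exists_mem_forall_inner_sub_le_zero ⟨0, G.zero_mem_fractionalIndepSets⟩
    G.isClosed_fractionalIndepSets.isComplete G.convex_fractionalIndepSets one
  refine ⟨fun v => 1 - a v, fun v => by linarith [(ha.1 v).2],
    fun u v huv => by linarith [ha.2 u v huv], fun L hL => ?_⟩
  set χ : EuclideanSpace ℝ V := WithLp.toLp 2 fun v => if v ∈ L then 1 else 0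
  have hχ := hproj χ (G.indicator_mem_fractionalIndepSets hL)
  rw [inner_sub_right] at hχ
  calc ∑ v ∈ L, (1 - a v) = ⟪one - a, χ⟫ := by
        simp [EuclideanSpace.real_inner_eq_sum, one, χ, Finset.sum_ite_mem]
    _ ≤ ⟪one - a, a⟫ := by linarith
    _ = ∑ v, (1 - a v) * a v := by simp [EuclideanSpace.real_inner_eq_sum, one]
    _ ≤ Fintype.card V / 4 := sum_mul_one_sub_le_card_div_four a
end

section
/- Let (N, v) be a simple game on n players in which no minimal winning coalition has size exactly 3. Then there exists a payoff vector p : N → ℝ with p ≥ 0 such that p(W) = ∑_{i∈W} p_i ≥ 1 for every winning coalition W and p(L) = ∑_{i∈L} p_i ≤ n/4 for every losing coalition L. (Hence the critical threshold value satisfies α(N, v) ≤ n/4.) -/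
/-!
Give payoff `1` to every player who wins alone and `w i` to every other player `i`, where `w`
is a fractional vertex cover of the graph of winning pairs with `w ≥ 1/4` and `w(I) ≤ n/4` on
independent sets. A winning coalition contains a winning singleton, a winning pair, or a minimal
winning coalition, which then has at least four players; a losing coalition is an independent
set without winning singletons.

Such a `w` exists by a minimax argument: by Hahn–Banach it suffices to satisfy, inside the box
`[1/4, 1]ⁿ`, each nonnegative combination of the constraints. If a combination puts total
weight `Y` on independent sets, of which `μ i` on those containing `i`, take
`w i = max (1/4) (1 - μ i / Y)`: no independent set contains both ends of an edge `uv`, so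
`μ u + μ v ≤ Y`, and `μ * max (1/4) (1 - μ / Y) ≤ Y / 4` whenever `0 ≤ μ ≤ Y`.
-/

open Finset Matrix

theorem exists_mem_nonneg_of_forall_dotProduct {ι : Type*} [Fintype ι]
    {S : Set (ι → ℝ)} (hconv : Convex ℝ S) (hcomp : IsCompact S)
    (h : ∀ y : ι → ℝ, 0 ≤ y → ∃ s ∈ S, 0 ≤ y ⬝ᵥ s) : ∃ s ∈ S, 0 ≤ s := by
  classical
  by_contra! hS
  obtain ⟨f, hf_nonneg, hf_neg⟩ := (ProperCone.positive ℝ (ι → ℝ)).hyperplane_separation hconv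
    hcomp (Set.disjoint_left.2 fun s hs hs0 => hS s hs hs0)
  obtain ⟨s, hs, hys⟩ := h (fun c => f (Pi.single c 1))
    (fun c => hf_nonneg _ (by simp [Pi.single_nonneg]))
  have hfs : f s = (fun c => f (Pi.single c 1)) ⬝ᵥ s := by
    conv_lhs => rw [pi_eq_sum_univ' s]
    simp [dotProduct, map_sum, mul_comm]
  exact (hf_neg s hs).not_ge (hfs ▸ hys)

theorem exists_mem_mulVec_add_nonneg_of_forall_dotProduct {m n : Type*} [Fintype m] [Fintype n]
    (A : Matrix m n ℝ) (b : m → ℝ) {K : Set (n → ℝ)} (hconv : Convex ℝ K) (hcomp : IsCompact K)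
    (h : ∀ y : m → ℝ, 0 ≤ y → ∃ x ∈ K, 0 ≤ y ⬝ᵥ (A *ᵥ x + b)) :
    ∃ x ∈ K, 0 ≤ A *ᵥ x + b := by
  have hS : Convex ℝ ((fun x => A *ᵥ x + b) '' K) := by
    simpa [Set.image_image, add_comm] using (hconv.linear_image A.mulVecLin).translate b
  obtain ⟨_, ⟨x, hx, rfl⟩, hx0⟩ :=
    exists_mem_nonneg_of_forall_dotProduct hS (hcomp.image (by fun_prop)) (by simpa using h)
  exact ⟨x, hx, hx0⟩

lemma mul_max_quarter_one_sub_div_le {μ Y : ℝ} (hμ : 0 ≤ μ) (hμY : μ ≤ Y) :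
    μ * max (1 / 4) (1 - μ / Y) ≤ Y / 4 := by
  rcases hμ.eq_or_lt with rfl | hμ
  · simp only [zero_mul]; linarith
  have hY : 0 < Y := hμ.trans_le hμY
  rcases le_total (1 / 4) (1 - μ / Y) with h | h
  · rw [max_eq_right h, ← sub_nonneg]
    have : Y / 4 - μ * (1 - μ / Y) = (Y - 2 * μ) ^ 2 / (4 * Y) := by field_simp; ring
    rw [this]; positivity
  · rw [max_eq_left h]; linarith

lemma sum_mul_sum_eq_sum_filter_mul {R ι V : Type*} [CommSemiring R] [Fintype ι] [Fintype V]
    [DecidableEq V] (F : ι → Finset V) (z : ι → R) (w : V → R) :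
    ∑ k, z k * ∑ i ∈ F k, w i = ∑ i, (∑ k with i ∈ F k, z k) * w i := by
  simp_rw [Finset.sum_mul, Finset.mul_sum, Finset.sum_filter]
  rw [Finset.sum_comm]
  simp only [Finset.sum_ite_mem, Finset.univ_inter]

theorem SimpleGraph.exists_fractional_cover_sum_indepSet_le_card_div_four {V : Type*} [Fintype V]
    (G : SimpleGraph V) :
    ∃ w : V → ℝ, (∀ i, 1 / 4 ≤ w i) ∧ (∀ u v, G.Adj u v → 1 ≤ w u + w v) ∧
      ∀ I : Finset V, G.IsIndepSet I → ∑ i ∈ I, w i ≤ Fintype.card V / 4 := by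
  classical
  let ι := {e : V × V // G.Adj e.1 e.2} ⊕ {I : Finset V // G.IsIndepSet I}
  let A : Matrix ι V ℝ := Sum.elim (fun e => Pi.single e.1.1 1 + Pi.single e.1.2 1)
    (fun I i => if i ∈ I.1 then -1 else 0)
  let b : ι → ℝ := Sum.elim (fun _ => -1) (fun _ => Fintype.card V / 4)
  have hedge (w : V → ℝ) (e) : (A *ᵥ w + b) (.inl e) = w e.1.1 + w e.1.2 - 1 := by
    simp [A, b, mulVec, dotProduct, add_mul, Finset.sum_add_distrib, Pi.single_apply,
      sub_eq_add_neg]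
  have hindep (w : V → ℝ) (I) : (A *ᵥ w + b) (.inr I) = Fintype.card V / 4 - ∑ i ∈ I.1, w i := by
    simp [A, b, mulVec, dotProduct, sub_eq_add_neg, add_comm]
  suffices h : ∀ y : ι → ℝ, 0 ≤ y →
      ∃ x ∈ Set.Icc (fun _ => 1 / 4 : V → ℝ) 1, 0 ≤ y ⬝ᵥ (A *ᵥ x + b) by
    obtain ⟨w, hw, hw0⟩ :=
      exists_mem_mulVec_add_nonneg_of_forall_dotProduct A b (convex_Icc _ _) isCompact_Icc h
    refine ⟨w, fun i => hw.1 i, fun u v huv => ?_, fun I hI => ?_⟩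
    · simpa [hedge] using hw0 (.inl ⟨(u, v), huv⟩)
    · simpa [hindep] using hw0 (.inr ⟨I, hI⟩)
  intro y hy
  let Y := ∑ I, y (.inr I)
  let μ (i : V) := ∑ I with i ∈ I.1, y (.inr I)
  have hY : 0 ≤ Y := Finset.sum_nonneg fun I _ => hy _
  have hμ (i : V) : 0 ≤ μ i := Finset.sum_nonneg fun I _ => hy _
  have hμY (i : V) : μ i ≤ Y :=
    Finset.sum_le_sum_of_subset_of_nonneg (filter_subset _ _) fun I _ _ => hy _
  have hμ_adj (u v : V) (huv : G.Adj u v) : μ u + μ v ≤ Y := by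
    rw [← Finset.sum_union]
    · exact Finset.sum_le_sum_of_subset_of_nonneg (subset_univ _) fun I _ _ => hy _
    · exact disjoint_filter.2 fun I _ hu hv => I.2 hu hv huv.ne huv
  refine ⟨fun i => max (1 / 4) (1 - μ i / Y), ⟨fun i => le_max_left _ _,
    fun i => max_le (by norm_num) (by simpa using div_nonneg (hμ i) hY)⟩, ?_⟩
  rw [dotProduct, Fintype.sum_sum_type]
  refine add_nonneg (Finset.sum_nonneg fun e _ => mul_nonneg (hy _) ?_) ?_
  · have : μ e.1.1 / Y + μ e.1.2 / Y ≤ 1 := by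
      rw [← add_div]; exact div_le_one_of_le₀ (hμ_adj _ _ e.2) hY
    rw [hedge, sub_nonneg]
    linarith [le_max_right (1 / 4 : ℝ) (1 - μ e.1.1 / Y),
      le_max_right (1 / 4 : ℝ) (1 - μ e.1.2 / Y)]
  · simp_rw [hindep, mul_sub, Finset.sum_sub_distrib, sum_mul_sum_eq_sum_filter_mul,
      ← Finset.sum_mul, sub_nonneg]
    calc ∑ i, μ i * max (1 / 4) (1 - μ i / Y)
        ≤ ∑ _i : V, Y / 4 :=
          Finset.sum_le_sum fun i _ => mul_max_quarter_one_sub_div_le (hμ i) (hμY i)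
      _ = Y * (Fintype.card V / 4) := by simp; ring

lemma one_le_sum_of_card_ne_three {α : Type*} [DecidableEq α] {P : Finset α → Prop}
    {w : α → ℝ} (hw : ∀ i, 1 / 4 ≤ w i) (hpair : ∀ u v, u ≠ v → P {u, v} → 1 ≤ w u + w v)
    (hP : ¬ P ∅) {S : Finset α} (hS : P S) (hS_single : ∀ i ∈ S, ¬ P {i}) (hS3 : #S ≠ 3) :
    1 ≤ ∑ i ∈ S, w i := by
  obtain h | h | h | h : #S = 0 ∨ #S = 1 ∨ #S = 2 ∨ 4 ≤ #S := by omega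
  · exact absurd (card_eq_zero.1 h ▸ hS) hP
  · obtain ⟨i, rfl⟩ := card_eq_one.1 h
    exact absurd hS (hS_single i (mem_singleton_self i))
  · obtain ⟨u, v, huv, rfl⟩ := card_eq_two.1 h
    rw [sum_pair huv]
    exact hpair u v huv hS
  · calc (1 : ℝ) ≤ #S * (1 / 4) := by
          have : (4 : ℝ) ≤ #S := by exact_mod_cast h
          linarith
      _ = ∑ _i ∈ S, 1 / 4 := by simp
      _ ≤ ∑ i ∈ S, w i := sum_le_sum fun i _ => hw i

theorem alpha_le_quarter_of_no_min_winning_size_three_general (n : ℕ)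
    (winning : Finset (Fin n) → Prop)
    (hmono : ∀ S T : Finset (Fin n), S ⊆ T → winning S → winning T)
    (hempty : ¬ winning ∅)
    (hmin : ∀ W : Finset (Fin n), winning W → (∀ S ⊂ W, ¬ winning S) → W.card ≠ 3) :
    ∃ p : Fin n → ℝ,
      (∀ i, 0 ≤ p i) ∧
      (∀ W : Finset (Fin n), winning W → 1 ≤ ∑ i ∈ W, p i) ∧
      (∀ L : Finset (Fin n), ¬ winning L → ∑ i ∈ L, p i ≤ (n : ℝ) / 4) := by
  classical
  let G := SimpleGraph.fromRel fun u v : Fin n => winning {u, v}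
  obtain ⟨w, hw, hw_adj, hw_indep⟩ := G.exists_fractional_cover_sum_indepSet_le_card_div_four
  have hw0 (i : Fin n) : 0 ≤ w i := by linarith [hw i]
  let p (i : Fin n) : ℝ := if winning {i} then 1 else w i
  have hp0 (i : Fin n) : 0 ≤ p i := by simp only [p]; split_ifs <;> simp [hw0]
  refine ⟨p, hp0, fun W hW => ?_, fun L hL => ?_⟩
  · by_cases hsingle : ∃ i ∈ W, winning {i}
    · obtain ⟨i, hi, hwin⟩ := hsingle
      calc (1 : ℝ) = p i := by simp [p, hwin]
        _ ≤ ∑ j ∈ W, p j := single_le_sum (fun j _ => hp0 j) hi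
    push Not at hsingle
    rw [sum_congr rfl fun i hi => if_neg (hsingle i hi)]
    obtain ⟨S, hSW, hS⟩ := exists_minimal_le_of_wellFoundedLT winning W hW
    calc 1 ≤ ∑ i ∈ S, w i :=
          one_le_sum_of_card_ne_three hw (fun u v huv h => hw_adj u v (by simp [G, huv, h])) hempty
            hS.prop (fun i hi => hsingle i (hSW hi))
            (hmin S hS.prop fun T hT => hS.not_prop_of_lt hT)
      _ ≤ ∑ i ∈ W, w i := sum_le_sum_of_subset_of_nonneg hSW fun i _ _ => hw0 i
  · have hsingle (i : Fin n) (hi : i ∈ L) : ¬ winning {i} :=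
      fun h => hL (hmono _ _ (singleton_subset_iff.2 hi) h)
    rw [sum_congr rfl fun i hi => if_neg (hsingle i hi)]
    refine (hw_indep L fun u hu v hv _ huv => hL ?_).trans_eq (by simp)
    obtain ⟨-, h | h⟩ := SimpleGraph.fromRel_adj .. |>.1 huv
    · exact hmono _ _ (insert_subset hu (singleton_subset_iff.2 hv)) h
    · exact hmono _ _ (insert_subset hv (singleton_subset_iff.2 hu)) h

/-- A simple game in which no minimal winning coalition has size 3 satisfies
α(N,v) ≤ n/4. -/
theorem alpha_le_quarter_of_no_min_winning_size_three (n : ℕ)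
    (winning : Finset (Fin n) → Prop)
    (hmono : ∀ S T : Finset (Fin n), S ⊆ T → winning S → winning T)
    (hempty : ¬ winning ∅) (hfull : winning Finset.univ)
    (hmin : ∀ W : Finset (Fin n), winning W → (∀ S ⊂ W, ¬ winning S) → W.card ≠ 3) :
    ∃ p : Fin n → ℝ,
      (∀ i, 0 ≤ p i) ∧
      (∀ W : Finset (Fin n), winning W → 1 ≤ ∑ i ∈ W, p i) ∧
      (∀ L : Finset (Fin n), ¬ winning L → ∑ i ∈ L, p i ≤ (n : ℝ) / 4) :=
  alpha_le_quarter_of_no_min_winning_size_three_general n winning hmono hempty hmin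
end

section
/- Let (N, v) be a simple game on n players in which every minimal winning coalition has size exactly 3. Then there exists a payoff vector p : N → ℝ with p ≥ 0 such that p(W) = ∑_{i∈W} p_i ≥ 1 for every winning coalition W and p(L) = ∑_{i∈L} p_i ≤ n/4 for every losing coalition L. (Hence the critical threshold value satisfies α(N, v) ≤ n/4.) -/
/-!
Fix a losing coalition `M` of maximum size and pay `1/4` to the members of `M` and `1/2` to
everybody else, so that `4 p(S) = |S| + |S \ M|`. A minimal winning coalition has three members
and is not contained in `M`, so it gets at least `3/4 + 1/4`. A losing coalition `L` has
`|L| ≤ |M|`, hence `|L| + |L \ M| ≤ |M| + |L \ M| = |M ∪ L| ≤ n`.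
-/

open Finset

namespace SimpleGame

variable {α : Type*}

lemma exists_max_card_not [Fintype α] {P : Finset α → Prop} (h : ¬ P ∅) :
    ∃ M, ¬ P M ∧ ∀ L, ¬ P L → #L ≤ #M := by
  classical
  obtain ⟨M, hM, hmax⟩ := exists_max_image (univ.filter fun L => ¬ P L) card ⟨∅, by simpa⟩
  exact ⟨M, (mem_filter.1 hM).2, fun L hL => hmax L (by simpa)⟩

variable [DecidableEq α]

noncomputable def quarterHalfPayoff (M : Finset α) (i : α) : ℝ :=
  if i ∈ M then 1 / 4 else 1 / 2

lemma quarterHalfPayoff_nonneg (M : Finset α) (i : α) : 0 ≤ quarterHalfPayoff M i := by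
  unfold quarterHalfPayoff
  split_ifs <;> norm_num

lemma sum_quarterHalfPayoff (M S : Finset α) :
    ∑ i ∈ S, quarterHalfPayoff M i = (#S + #(S \ M) : ℝ) / 4 := by
  have hsplit : #(S ∩ M) + #(S \ M) = #S := card_inter_add_card_sdiff S M
  rw [← hsplit]
  unfold quarterHalfPayoff
  rw [sum_ite, sum_const, sum_const, filter_mem_eq_inter, ← sdiff_eq_filter]
  simp only [nsmul_eq_mul, Nat.cast_add]
  ring

lemma one_le_sum_quarterHalfPayoff {M T : Finset α} (hT : #T = 3) (hTM : ¬ T ⊆ M) :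
    1 ≤ ∑ i ∈ T, quarterHalfPayoff M i := by
  have hout : (1 : ℝ) ≤ #(T \ M) := by exact_mod_cast card_pos.2 (sdiff_nonempty.2 hTM)
  rw [sum_quarterHalfPayoff, hT]
  linarith

lemma sum_quarterHalfPayoff_le [Fintype α] {M L : Finset α} (hLM : #L ≤ #M) :
    ∑ i ∈ L, quarterHalfPayoff M i ≤ Fintype.card α / 4 := by
  have hunion : #(L \ M) + #M = #(L ∪ M) := card_sdiff_add_card L M
  have hcard : #L + #(L \ M) ≤ Fintype.card α := by
    have := card_le_univ (L ∪ M)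
    omega
  rw [sum_quarterHalfPayoff]
  gcongr
  exact_mod_cast hcard

end SimpleGame

open SimpleGame in
theorem alpha_le_quarter_of_all_min_winning_size_three_general (n : ℕ)
    (winning : Finset (Fin n) → Prop)
    (hmono : ∀ S T : Finset (Fin n), S ⊆ T → winning S → winning T)
    (hempty : ¬ winning ∅)
    (hmin : ∀ W : Finset (Fin n), winning W → (∀ S ⊂ W, ¬ winning S) → W.card = 3) :
    ∃ p : Fin n → ℝ,
      (∀ i, 0 ≤ p i) ∧
      (∀ W : Finset (Fin n), winning W → 1 ≤ ∑ i ∈ W, p i) ∧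
      (∀ L : Finset (Fin n), ¬ winning L → ∑ i ∈ L, p i ≤ (n : ℝ) / 4) := by
  obtain ⟨M, hM, hMmax⟩ := exists_max_card_not hempty
  refine ⟨quarterHalfPayoff M, quarterHalfPayoff_nonneg M, fun W hW => ?_, fun L hL => ?_⟩
  · obtain ⟨T, hTW, hTmin⟩ := exists_minimal_le_of_wellFoundedLT winning W hW
    have hT3 : #T = 3 := hmin T hTmin.prop fun S hS => hTmin.not_prop_of_lt hS
    have hTM : ¬ T ⊆ M := fun h => hM (hmono T M h hTmin.prop)
    calc 1 ≤ ∑ i ∈ T, quarterHalfPayoff M i := one_le_sum_quarterHalfPayoff hT3 hTM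
      _ ≤ ∑ i ∈ W, quarterHalfPayoff M i :=
        sum_le_sum_of_subset_of_nonneg hTW fun i _ _ => quarterHalfPayoff_nonneg M i
  · simpa using sum_quarterHalfPayoff_le (hMmax L hL)

/-- A simple game in which every minimal winning coalition has size 3 satisfies
α(N,v) ≤ n/4. -/
theorem alpha_le_quarter_of_all_min_winning_size_three (n : ℕ)
    (winning : Finset (Fin n) → Prop)
    (hmono : ∀ S T : Finset (Fin n), S ⊆ T → winning S → winning T)
    (hempty : ¬ winning ∅) (hfull : winning Finset.univ)
    (hmin : ∀ W : Finset (Fin n), winning W → (∀ S ⊂ W, ¬ winning S) → W.card = 3) :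
    ∃ p : Fin n → ℝ,
      (∀ i, 0 ≤ p i) ∧
      (∀ W : Finset (Fin n), winning W → 1 ≤ ∑ i ∈ W, p i) ∧
      (∀ L : Finset (Fin n), ¬ winning L → ∑ i ∈ L, p i ≤ (n : ℝ) / 4) :=
  alpha_le_quarter_of_all_min_winning_size_three_general n winning hmono hempty hmin
end

section
/- Let (N, v) be a complete simple game on n players, with the players ordered so that 1 ≽ 2 ≽ … ≽ n. Then there exists a payoff vector p : N → ℝ with p ≥ 0 such that p(W) = ∑_{i∈W} p_i ≥ 1/√n for every winning coalition W and p(L) = ∑_{i∈L} p_i ≤ ln(n) for every losing coalition L. -/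
/-!
Let `c = ⌊√n⌋`. Pay every player `1/((c+1)√n)`, and an extra `1/√n` to every player `i` who
heads a winning coalition of at most `c` players, all of them weaker than `i`.
A winning coalition either is such a coalition for its strongest member or has more than `c`
members; either way it receives at least `1/√n`. A losing coalition `L` contains fewer than `c`
heading players: otherwise the coalition headed by the weakest of them could, by completeness,
be exchanged member by member for heading players of `L`, making `L` winning. Hence
`p(L) ≤ (c-1)/√n + (n-1)/((c+1)√n) ≤ 2 - 2/√n ≤ 2 ln √n`.
-/

open Finset

section CompleteGame

variable {α : Type*} [LinearOrder α] {winning : Finset α → Prop}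

theorem winning_of_exchange
    (hmono : ∀ S T : Finset α, S ⊆ T → winning S → winning T)
    (hcomplete : ∀ i j : α, i ≤ j → ∀ S : Finset α, i ∉ S → j ∉ S →
      winning (insert j S) → winning (insert i S))
    {S G : Finset α} (hcard : #(S \ G) ≤ #(G \ S))
    (hle : ∀ g ∈ G \ S, ∀ s ∈ S \ G, g ≤ s) (hS : winning S) : winning G := by
  -- trade one member of `S \ G` for one of `G \ S` at a time
  induction hk : #(S \ G) generalizing S with
  | zero => exact hmono S G (sdiff_eq_empty_iff_subset.mp (card_eq_zero.mp hk)) hS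
  | succ k ih =>
    obtain ⟨s, hs⟩ := card_pos.mp (by omega : 0 < #(S \ G))
    obtain ⟨g, hg⟩ := card_pos.mp (by omega : 0 < #(G \ S))
    have hT : winning (insert g (S.erase s)) :=
      hcomplete g s (hle g hg s hs) _ (fun h => (mem_sdiff.mp hg).2 (mem_of_mem_erase h))
        (notMem_erase s S) (by rwa [insert_erase (mem_sdiff.mp hs).1])
    have hTG : insert g (S.erase s) \ G = (S \ G).erase s := by
      ext x; simp only [mem_sdiff, mem_insert, mem_erase] at hs hg ⊢; grind
    have hGT : G \ insert g (S.erase s) = (G \ S).erase g := by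
      ext x; simp only [mem_sdiff, mem_insert, mem_erase] at hs hg ⊢; grind
    refine ih ?_ ?_ hT ?_
    · rw [hTG, hGT, card_erase_of_mem hs, card_erase_of_mem hg]; omega
    · rw [hTG, hGT]
      exact fun x hx y hy => hle x (mem_of_mem_erase hx) y (mem_of_mem_erase hy)
    · rw [hTG, card_erase_of_mem hs, hk]; rfl

def HeadsSmallWinning (winning : Finset α → Prop) (c : ℕ) (i : α) : Prop :=
  ∃ S, winning S ∧ #S ≤ c ∧ ∀ x ∈ S, i ≤ x

theorem lt_card_of_not_headsSmallWinning {c : ℕ} {W : Finset α} (hW : winning W) {i : α}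
    (hi : ∀ x ∈ W, i ≤ x) (hhead : ¬ HeadsSmallWinning winning c i) : c < #W := by
  by_contra! h
  exact hhead ⟨W, hW, h, hi⟩

theorem card_filter_headsSmallWinning_lt
    (hmono : ∀ S T : Finset α, S ⊆ T → winning S → winning T)
    (hcomplete : ∀ i j : α, i ≤ j → ∀ S : Finset α, i ∉ S → j ∉ S →
      winning (insert j S) → winning (insert i S))
    {c : ℕ} [DecidablePred (HeadsSmallWinning winning c)] (hc : 1 ≤ c) {L : Finset α}
    (hL : ¬ winning L) :
    #(L.filter (HeadsSmallWinning winning c)) < c := by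
  set G := L.filter (HeadsSmallWinning winning c)
  by_contra! hG
  have hGne : G.Nonempty := card_pos.mp (by omega)
  obtain ⟨S, hS, hSc, hSle⟩ := (mem_filter.mp (G.max'_mem hGne)).2
  refine hL (hmono G L (filter_subset _ _) (winning_of_exchange hmono hcomplete ?_ ?_ hS))
  · exact card_sdiff_le_card_sdiff_iff.mpr (hSc.trans hG)
  · exact fun g hg s hs => (G.le_max' g (mem_sdiff.mp hg).1).trans (hSle s (mem_sdiff.mp hs).1)

open Classical in
noncomputable def headPayoff (winning : Finset α → Prop) (c : ℕ) (i : α) : ℝ :=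
  (if HeadsSmallWinning winning c i then 1 else 0) + 1 / (c + 1)

theorem headPayoff_nonneg (c : ℕ) (i : α) : 0 ≤ headPayoff winning c i := by
  unfold headPayoff; split_ifs <;> positivity

open Classical in
theorem sum_headPayoff (c : ℕ) (S : Finset α) :
    ∑ i ∈ S, headPayoff winning c i =
      #(S.filter (HeadsSmallWinning winning c)) + #S / (c + 1) := by
  simp only [headPayoff, sum_add_distrib, sum_boole, sum_const, nsmul_eq_mul, mul_one_div]

theorem one_le_sum_headPayoff_of_winning (hempty : ¬ winning ∅) (c : ℕ) {W : Finset α}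
    (hW : winning W) : 1 ≤ ∑ i ∈ W, headPayoff winning c i := by
  have hne : W.Nonempty := nonempty_iff_ne_empty.mpr (by rintro rfl; exact hempty hW)
  by_cases hhead : HeadsSmallWinning winning c (W.min' hne)
  · calc (1 : ℝ) ≤ headPayoff winning c (W.min' hne) := by
          simp only [headPayoff, if_pos hhead]
          linarith [show (0 : ℝ) ≤ 1 / (c + 1) by positivity]
      _ ≤ ∑ i ∈ W, headPayoff winning c i :=
          single_le_sum (fun i _ => headPayoff_nonneg c i) (W.min'_mem hne)
  · have hc : (c : ℝ) + 1 ≤ #W := by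
      exact_mod_cast lt_card_of_not_headsSmallWinning hW W.min'_le hhead
    classical
    rw [sum_headPayoff]
    exact le_add_of_nonneg_of_le (Nat.cast_nonneg _) ((one_le_div (by positivity)).mpr hc)

theorem sum_headPayoff_le_of_losing
    (hmono : ∀ S T : Finset α, S ⊆ T → winning S → winning T)
    (hcomplete : ∀ i j : α, i ≤ j → ∀ S : Finset α, i ∉ S → j ∉ S →
      winning (insert j S) → winning (insert i S))
    {c : ℕ} (hc : 1 ≤ c) {L : Finset α} (hL : ¬ winning L) :
    ∑ i ∈ L, headPayoff winning c i ≤ ((c : ℝ) - 1) + #L / (c + 1) := by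
  classical
  have hlt := card_filter_headsSmallWinning_lt hmono hcomplete hc hL
  have hheads : ((#(L.filter (HeadsSmallWinning winning c)) : ℕ) : ℝ) ≤ (c : ℝ) - 1 := by
    rw [le_sub_iff_add_le]; exact_mod_cast hlt
  rw [sum_headPayoff]
  linarith

end CompleteGame

theorem nat_sqrt_sub_one_add_div_le (n : ℕ) :
    ((Nat.sqrt n : ℝ) - 1) + ((n : ℝ) - 1) / (Nat.sqrt n + 1) ≤ 2 * √n - 2 := by
  set t : ℝ := Nat.sqrt n + 1
  have hlow : √n < t := Real.real_sqrt_lt_nat_sqrt_succ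
  have hup : t ≤ √n + 1 := by linarith [Real.nat_sqrt_le_real_sqrt (a := n)]
  have hsq : √n * √n = n := Real.mul_self_sqrt n.cast_nonneg
  have ht : 0 < t := by positivity
  -- equivalent to `(t - √n)² ≤ 1`
  have hdiv : ((n : ℝ) - 1) / t ≤ 2 * √n - t := by
    rw [div_le_iff₀ ht]
    nlinarith
  linarith

theorem two_mul_one_sub_inv_sqrt_le_log {x : ℝ} (hx : 0 < x) :
    2 * (1 - (√x)⁻¹) ≤ Real.log x := by
  have h := Real.one_sub_inv_le_log_of_pos (Real.sqrt_pos.mpr hx)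
  rw [Real.log_sqrt hx.le] at h
  linarith

/-- In a complete simple game on n players there is a nonnegative payoff p
with p(W) ≥ 1/√n for every winning coalition W and p(L) ≤ ln n for every losing
coalition L. -/
theorem complete_payoff_sqrt_log (n : ℕ)
    (winning : Finset (Fin n) → Prop)
    (hmono : ∀ S T : Finset (Fin n), S ⊆ T → winning S → winning T)
    (hempty : ¬ winning ∅) (hfull : winning Finset.univ)
    (hcomplete : ∀ i j : Fin n, i ≤ j → ∀ S : Finset (Fin n), i ∉ S → j ∉ S →
      winning (insert j S) → winning (insert i S)) :
    ∃ p : Fin n → ℝ,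
      (∀ i, 0 ≤ p i) ∧
      (∀ W : Finset (Fin n), winning W → 1 / Real.sqrt n ≤ ∑ i ∈ W, p i) ∧
      (∀ L : Finset (Fin n), ¬ winning L → ∑ i ∈ L, p i ≤ Real.log n) := by
  have hn : 0 < n := Nat.pos_of_ne_zero (by rintro rfl; exact hempty (by simpa using hfull))
  have hr : 0 < √(n : ℝ) := Real.sqrt_pos.mpr (by exact_mod_cast hn)
  set c := Nat.sqrt n
  refine ⟨fun i => headPayoff winning c i / √n,
    fun i => div_nonneg (headPayoff_nonneg c i) hr.le, fun W hW => ?_, fun L hL => ?_⟩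
  · rw [← sum_div]
    exact div_le_div_of_nonneg_right (one_le_sum_headPayoff_of_winning hempty c hW) hr.le
  have hL_card : (#L : ℝ) ≤ n - 1 := by
    have := (card_lt_iff_ne_univ L).mpr (by rintro rfl; exact hL hfull)
    rw [Fintype.card_fin] at this
    rw [le_sub_iff_add_le]; exact_mod_cast this
  calc ∑ i ∈ L, headPayoff winning c i / √n = (∑ i ∈ L, headPayoff winning c i) / √n :=
        (sum_div ..).symm
    _ ≤ (2 * √n - 2) / √n := by
        gcongr
        calc _ ≤ ((c : ℝ) - 1) + #L / (c + 1) :=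
              sum_headPayoff_le_of_losing hmono hcomplete (Nat.sqrt_pos.mpr hn) hL
          _ ≤ ((c : ℝ) - 1) + (n - 1) / (c + 1) := by gcongr
          _ ≤ 2 * √n - 2 := nat_sqrt_sub_one_add_div_le n
    _ = 2 * (1 - (√n)⁻¹) := by field_simp
    _ ≤ Real.log n := two_mul_one_sub_inv_sqrt_le_log (by exact_mod_cast hn)
end

section
/- Let G = (V, E) be a finite simple graph whose maximum independent set has size k, and let G* be the graph on vertex set V × {1, 2} in which distinct vertices (u, a) and (v, b) are adjacent if and only if u = v or uv ∈ E. Then: (a) the constant payoff p ≡ 1/2 on V × {1,2} satisfies p(x) + p(y) ≥ 1 for every edge xy of G*, and every independent set L* of G* satisfies ∑_{x∈L*} p(x) ≤ k/2; and (b) for every payoff p* : V × {1,2} → ℝ with p* ≥ 0 and p*(x) + p*(y) ≥ 1 for every edge xy of G*, there exists an independent set L* of G* with ∑_{x∈L*} p*(x) ≥ k/2. (Hence the critical threshold value of the graphic game on G* equals k/2.) -/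
/-- The strong product `G*` of a graph `G` with a single edge: vertex set `V × Bool`,
with distinct vertices `(u, a)` and `(v, b)` adjacent iff `u = v` or `u ~ v` in `G`. -/
def strongProdEdge {V : Type*} (G : SimpleGraph V) : SimpleGraph (V × Bool) where
  Adj x y := x ≠ y ∧ (x.1 = y.1 ∨ G.Adj x.1 y.1)
  symm := by
    constructor
    intro x y h
    exact ⟨h.1.symm, h.2.imp Eq.symm (fun ha => G.adj_symm ha)⟩
  loopless := by
    constructor
    intro x h
    exact h.1 rfl

/-!
An independent set of `G*` meets each fibre `{v} × Bool` at most once, so projecting it to `V`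
gives an independent set of `G` of the same size; hence the payoff `1/2` earns at most `k/2`.
Conversely, for a feasible payoff `p` the two vertices of a fibre are adjacent, so one of them
carries at least `1/2`; lifting a maximum independent set of `G` to these heavier copies gives
an independent set of `G*` earning at least `k/2`.
-/

theorem SimpleGraph.isIndepSet_iff_forall_not_adj {α : Type*} {H : SimpleGraph α} {s : Set α} :
    H.IsIndepSet s ↔ ∀ u ∈ s, ∀ v ∈ s, ¬ H.Adj u v :=
  ⟨fun hs _ hu _ hv huv => hs hu hv huv.ne huv, fun h _ hu _ hv _ => h _ hu _ hv⟩

open SimpleGraph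

section

variable {V : Type*} {G : SimpleGraph V}

theorem strongProdEdge_adj_of_fst_eq {x y : V × Bool} (hne : x ≠ y) (h : x.1 = y.1) :
    (strongProdEdge G).Adj x y :=
  ⟨hne, Or.inl h⟩

theorem strongProdEdge_adj_of_adj_fst {x y : V × Bool} (h : G.Adj x.1 y.1) :
    (strongProdEdge G).Adj x y :=
  ⟨fun hxy => G.loopless.irrefl _ (hxy ▸ h), Or.inr h⟩

section Projection

variable {s : Set (V × Bool)} (hs : (strongProdEdge G).IsIndepSet s)
include hs

theorem SimpleGraph.IsIndepSet.injOn_fst_of_strongProdEdge : Set.InjOn Prod.fst s :=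
  fun _ hx _ hy hxy => by_contra fun hne => hs hx hy hne (strongProdEdge_adj_of_fst_eq hne hxy)

theorem SimpleGraph.IsIndepSet.image_fst_of_strongProdEdge : G.IsIndepSet (Prod.fst '' s) := by
  rintro _ ⟨x, hx, rfl⟩ _ ⟨y, hy, rfl⟩ hne
  exact fun h => hs hx hy (ne_of_apply_ne _ hne) (strongProdEdge_adj_of_adj_fst h)

end Projection

theorem exists_isIndepSet_card_eq_of_strongProdEdge {L : Finset (V × Bool)}
    (hL : (strongProdEdge G).IsIndepSet (L : Set (V × Bool))) :
    ∃ L' : Finset V, G.IsIndepSet (L' : Set V) ∧ L'.card = L.card := by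
  classical
  refine ⟨L.image Prod.fst, ?_, Finset.card_image_of_injOn hL.injOn_fst_of_strongProdEdge⟩
  rw [Finset.coe_image]
  exact hL.image_fst_of_strongProdEdge

theorem SimpleGraph.IsIndepSet.image_section_of_strongProdEdge {s : Set V} (hs : G.IsIndepSet s)
    (b : V → Bool) : (strongProdEdge G).IsIndepSet ((fun v => (v, b v)) '' s) := by
  rintro _ ⟨u, hu, rfl⟩ _ ⟨v, hv, rfl⟩ hne ⟨-, h | h⟩
  · subst h
    exact hne rfl
  · exact hs hu hv (G.ne_of_adj h) h

noncomputable def heavierCopy (p : V × Bool → ℝ) (v : V) : V × Bool :=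
  (v, decide (p (v, false) ≤ p (v, true)))

theorem half_le_heavierCopy {p : V × Bool → ℝ}
    (hp : ∀ x y, (strongProdEdge G).Adj x y → 1 ≤ p x + p y) (v : V) :
    1 / 2 ≤ p (heavierCopy p v) := by
  have hfibre := hp (v, true) (v, false) (strongProdEdge_adj_of_fst_eq (by simp) rfl)
  unfold heavierCopy
  by_cases hle : p (v, false) ≤ p (v, true)
  · rw [decide_eq_true hle]
    linarith
  · rw [decide_eq_false hle]
    linarith

theorem exists_isIndepSet_strongProdEdge_half_card_le_sum {p : V × Bool → ℝ}
    (hp : ∀ x y, (strongProdEdge G).Adj x y → 1 ≤ p x + p y)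
    {L : Finset V} (hL : G.IsIndepSet (L : Set V)) :
    ∃ Lstar : Finset (V × Bool), (strongProdEdge G).IsIndepSet (Lstar : Set (V × Bool)) ∧
      (L.card : ℝ) / 2 ≤ ∑ x ∈ Lstar, p x := by
  classical
  have hinj : Set.InjOn (heavierCopy p) (L : Set V) := fun _ _ _ _ h => congrArg Prod.fst h
  refine ⟨L.image (heavierCopy p), ?_, ?_⟩
  · rw [Finset.coe_image]
    exact hL.image_section_of_strongProdEdge _
  · calc (L.card : ℝ) / 2 = ∑ _v ∈ L, (1 : ℝ) / 2 := by simp [div_eq_mul_inv]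
      _ ≤ ∑ v ∈ L, p (heavierCopy p v) := Finset.sum_le_sum fun v _ => half_le_heavierCopy hp v
      _ = ∑ x ∈ L.image (heavierCopy p), p x := (Finset.sum_image hinj).symm

end

theorem strongProdEdge_alpha_eq_half_max_independent_general {V : Type*}
    (G : SimpleGraph V) (k : ℕ)
    (hex : ∃ L : Finset V, (∀ u ∈ L, ∀ v ∈ L, ¬ G.Adj u v) ∧ L.card = k)
    (hmax : ∀ L : Finset V, (∀ u ∈ L, ∀ v ∈ L, ¬ G.Adj u v) → L.card ≤ k) :
    ((∀ x y : V × Bool, (strongProdEdge G).Adj x y → 1 ≤ (1 : ℝ) / 2 + 1 / 2) ∧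
     (∀ Lstar : Finset (V × Bool),
        (∀ x ∈ Lstar, ∀ y ∈ Lstar, ¬ (strongProdEdge G).Adj x y) →
        ∑ _x ∈ Lstar, (1 : ℝ) / 2 ≤ (k : ℝ) / 2)) ∧
    (∀ pstar : V × Bool → ℝ, (∀ x, 0 ≤ pstar x) →
      (∀ x y : V × Bool, (strongProdEdge G).Adj x y → 1 ≤ pstar x + pstar y) →
      ∃ Lstar : Finset (V × Bool),
        (∀ x ∈ Lstar, ∀ y ∈ Lstar, ¬ (strongProdEdge G).Adj x y) ∧
        (k : ℝ) / 2 ≤ ∑ x ∈ Lstar, pstar x) := by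
  simp only [← Finset.mem_coe, ← isIndepSet_iff_forall_not_adj] at hex hmax ⊢
  refine ⟨⟨fun _ _ _ => by norm_num, fun Lstar hLstar => ?_⟩, fun p _ hp => ?_⟩
  · obtain ⟨L, hL, hcard⟩ := exists_isIndepSet_card_eq_of_strongProdEdge hLstar
    have hle : (Lstar.card : ℝ) ≤ k := by exact_mod_cast hcard ▸ hmax L hL
    rw [Finset.sum_const, nsmul_eq_mul]
    linarith
  · obtain ⟨L, hL, rfl⟩ := hex
    exact exists_isIndepSet_strongProdEdge_half_card_le_sum hp hL

/-- If the maximum independent set of G has size k, then the critical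
threshold value of the graphic game on G* equals k/2: (a) the constant payoff 1/2 is
feasible and gives at most k/2 on every independent set of G*; (b) every feasible payoff
gives at least k/2 on some independent set of G*. -/
theorem strongProdEdge_alpha_eq_half_max_independent {V : Type*} [Fintype V]
    (G : SimpleGraph V) (k : ℕ)
    (hex : ∃ L : Finset V, (∀ u ∈ L, ∀ v ∈ L, ¬ G.Adj u v) ∧ L.card = k)
    (hmax : ∀ L : Finset V, (∀ u ∈ L, ∀ v ∈ L, ¬ G.Adj u v) → L.card ≤ k) :
    ((∀ x y : V × Bool, (strongProdEdge G).Adj x y → 1 ≤ (1 : ℝ) / 2 + 1 / 2) ∧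
     (∀ Lstar : Finset (V × Bool),
        (∀ x ∈ Lstar, ∀ y ∈ Lstar, ¬ (strongProdEdge G).Adj x y) →
        ∑ _x ∈ Lstar, (1 : ℝ) / 2 ≤ (k : ℝ) / 2)) ∧
    (∀ pstar : V × Bool → ℝ, (∀ x, 0 ≤ pstar x) →
      (∀ x y : V × Bool, (strongProdEdge G).Adj x y → 1 ≤ pstar x + pstar y) →
      ∃ Lstar : Finset (V × Bool),
        (∀ x ∈ Lstar, ∀ y ∈ Lstar, ¬ (strongProdEdge G).Adj x y) ∧
        (k : ℝ) / 2 ≤ ∑ x ∈ Lstar, pstar x) :=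
  strongProdEdge_alpha_eq_half_max_independent_general G k hex hmax
end

section
/- Let n ≥ 4 be an even integer and let C_n be the cycle graph on vertex set {1, …, n} with edges {i, i+1} for i = 1, …, n−1 and the edge {n, 1}. Then: (a) for every payoff p : {1,…,n} → ℝ with p ≥ 0 and p(i) + p(j) ≥ 1 for every edge ij of C_n, there exists an independent set L of C_n with ∑_{i∈L} p(i) ≥ n/4; and (b) the constant payoff p ≡ 1/2 satisfies p(i) + p(j) ≥ 1 on every edge and ∑_{i∈L} p(i) ≤ n/4 for every independent set L. (Hence the critical threshold value of the graphic game on C_n equals n/4.) -/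
/-- The cycle graph on vertex set `Fin n`, with edges `{i, i+1 (mod n)}`. -/
def cycleGraph (n : ℕ) : SimpleGraph (Fin n) where
  Adj i j := i ≠ j ∧ ((i.val + 1) % n = j.val ∨ (j.val + 1) % n = i.val)
  symm := by
    constructor
    intro i j h
    exact ⟨h.1.symm, h.2.symm⟩
  loopless := by
    constructor
    intro i h
    exact h.1 rfl

/-! Rotation `i ↦ i + 1` is a permutation of the vertices of `C_n` moving every vertex along an
edge. Summing `p i + p (i + 1) ≥ 1` over all `i` gives `2 ∑ p ≥ n`, and for even `n` the two parity
classes are independent sets, so one of them carries at least `n / 4`. Conversely an independent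
set `L` is disjoint from its rotation, so `2 |L| ≤ n`. -/

open Finset

namespace SimpleGraph

variable {V : Type*} [Fintype V] {G : SimpleGraph V}

theorem card_le_two_mul_sum_of_adj_perm (σ : Equiv.Perm V) (hσ : ∀ v, G.Adj v (σ v))
    {p : V → ℝ} (hp : ∀ u v, G.Adj u v → 1 ≤ p u + p v) :
    (Fintype.card V : ℝ) ≤ 2 * ∑ v, p v :=
  calc (Fintype.card V : ℝ) = ∑ _v : V, (1 : ℝ) := by simp
    _ ≤ ∑ v, (p v + p (σ v)) := sum_le_sum fun v _ => hp v (σ v) (hσ v)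
    _ = 2 * ∑ v, p v := by rw [sum_add_distrib, Equiv.sum_comp σ p, two_mul]

theorem IsIndepSet.two_mul_card_le {L : Finset V} (hL : G.IsIndepSet L) (σ : Equiv.Perm V)
    (hσ : ∀ v, G.Adj v (σ v)) : 2 * #L ≤ Fintype.card V := by
  have hdisj : Disjoint L (L.map σ.toEmbedding) := by
    refine Finset.disjoint_left.2 fun v hv hσv => ?_
    obtain ⟨u, hu, rfl⟩ := mem_map.1 hσv
    exact hL hu hv (G.ne_of_adj (hσ u)) (hσ u)
  calc 2 * #L = #(L.disjUnion _ hdisj) := by rw [card_disjUnion, card_map, two_mul]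
    _ ≤ Fintype.card V := card_le_univ _

theorem exists_isIndepSet_card_le_four_mul_sum (c : G.Coloring Bool) (σ : Equiv.Perm V)
    (hσ : ∀ v, G.Adj v (σ v)) {p : V → ℝ} (hp : ∀ u v, G.Adj u v → 1 ≤ p u + p v) :
    ∃ L : Finset V, G.IsIndepSet L ∧ (Fintype.card V : ℝ) ≤ 4 * ∑ v ∈ L, p v := by
  have hclass (b : Bool) : G.IsIndepSet ({v | c v = b} : Finset V) := by
    intro u hu v hv _ huv
    simp only [coe_filter, mem_univ, true_and, Set.mem_ofPred_eq] at hu hv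
    exact c.valid huv (hu.trans hv.symm)
  have htotal := card_le_two_mul_sum_of_adj_perm σ hσ hp
  rw [← sum_fiberwise univ c p, Fintype.sum_bool] at htotal
  by_cases h : (Fintype.card V : ℝ) ≤ 4 * ∑ v with c v = true, p v
  · exact ⟨_, hclass true, h⟩
  · exact ⟨_, hclass false, by linarith⟩

end SimpleGraph

namespace cycleGraph

theorem adj_finRotate {n : ℕ} (hn : n ≠ 1) (i : Fin n) :
    (cycleGraph n).Adj i (finRotate n i) := by
  obtain _ | _ | n := n
  · exact i.elim0
  · exact absurd rfl hn
  · rw [finRotate_apply]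
    exact ⟨left_ne_add.2 one_ne_zero, Or.inl (by simp [Fin.val_add])⟩

theorem val_mod_two_ne_of_adj {n : ℕ} (hn : Even n) {i j : Fin n}
    (h : (cycleGraph n).Adj i j) : i.val % 2 ≠ j.val % 2 := by
  have h2 := even_iff_two_dvd.1 hn
  rcases h with ⟨-, h | h⟩ <;> rw [← h, Nat.mod_mod_of_dvd _ h2] <;> omega

def parityColoring {n : ℕ} (hn : Even n) : (cycleGraph n).Coloring Bool :=
  SimpleGraph.Coloring.mk (fun i => decide (i.val % 2 = 0)) fun h => by
    simp only [ne_eq, decide_eq_decide]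
    have := val_mod_two_ne_of_adj hn h
    omega

end cycleGraph

theorem cycle_alpha_eq_quarter_general (n : ℕ) (heven : Even n) :
    (∀ p : Fin n → ℝ, (∀ i, 0 ≤ p i) →
      (∀ i j : Fin n, (cycleGraph n).Adj i j → 1 ≤ p i + p j) →
      ∃ L : Finset (Fin n), (∀ i ∈ L, ∀ j ∈ L, ¬ (cycleGraph n).Adj i j) ∧
        (n : ℝ) / 4 ≤ ∑ i ∈ L, p i) ∧
    ((∀ i j : Fin n, (cycleGraph n).Adj i j → 1 ≤ (1 : ℝ) / 2 + 1 / 2) ∧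
     (∀ L : Finset (Fin n), (∀ i ∈ L, ∀ j ∈ L, ¬ (cycleGraph n).Adj i j) →
        ∑ _i ∈ L, (1 : ℝ) / 2 ≤ (n : ℝ) / 4)) := by
  have hσ := cycleGraph.adj_finRotate (n := n) (by rintro rfl; exact Nat.not_even_one heven)
  refine ⟨fun p _ hp => ?_, fun _ _ _ => by norm_num, fun L hL => ?_⟩
  · obtain ⟨L, hL, hsum⟩ := SimpleGraph.exists_isIndepSet_card_le_four_mul_sum
      (cycleGraph.parityColoring heven) _ hσ hp
    refine ⟨L, fun i hi j hj hij => hL hi hj hij.ne hij, ?_⟩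
    rw [Fintype.card_fin] at hsum
    linarith
  · have hcard := SimpleGraph.IsIndepSet.two_mul_card_le (fun i hi j hj _ => hL i hi j hj) _ hσ
    rw [Fintype.card_fin] at hcard
    have : (2 * #L : ℝ) ≤ n := by exact_mod_cast hcard
    rw [sum_const, nsmul_eq_mul]
    linarith

/-- For even n ≥ 4, the critical threshold value of the graphic game on the
cycle C_n equals n/4: (a) every feasible payoff gives at least n/4 on some independent
set; (b) the constant payoff 1/2 is feasible and gives at most n/4 on every independent
set. -/
theorem cycle_alpha_eq_quarter (n : ℕ) (hn : 4 ≤ n) (heven : Even n) :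
    (∀ p : Fin n → ℝ, (∀ i, 0 ≤ p i) →
      (∀ i j : Fin n, (cycleGraph n).Adj i j → 1 ≤ p i + p j) →
      ∃ L : Finset (Fin n), (∀ i ∈ L, ∀ j ∈ L, ¬ (cycleGraph n).Adj i j) ∧
        (n : ℝ) / 4 ≤ ∑ i ∈ L, p i) ∧
    ((∀ i j : Fin n, (cycleGraph n).Adj i j → 1 ≤ (1 : ℝ) / 2 + 1 / 2) ∧
     (∀ L : Finset (Fin n), (∀ i ∈ L, ∀ j ∈ L, ¬ (cycleGraph n).Adj i j) →
        ∑ _i ∈ L, (1 : ℝ) / 2 ≤ (n : ℝ) / 4)) :=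
  cycle_alpha_eq_quarter_general n heven
end

section
/- Let G be a finite bipartite graph with parts A and B that has no isolated vertices, satisfies |A| ≤ |B|, and is well-spread with parameter λ = |A|/n where n = |A| + |B| (that is, |S|·|B| ≤ |N(S)|·|A| for every S ⊆ A). Define the payoff p : A ∪ B → ℝ by p(b) = 1/(4(1−λ)) for b ∈ B and p(a) = 1 − 1/(4(1−λ)) for a ∈ A. Then p(v) ≥ 1/4 for every vertex v, p(u) + p(v) ≥ 1 for every edge uv of G, and every independent set L ⊆ A ∪ B satisfies ∑_{v∈L} p(v) ≤ n/4. -/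
/-!
Write `a = |A|`, `b = |B|` and `c = 1/(4(1-λ)) = (a+b)/(4b)`, the payoff on `B`. Since
`a ≤ b`, both `c` and `1 - c` are at least `1/4`, and every edge has one endpoint of each
payoff, summing to `1`. An independent set `L` with `s` vertices in `A` and `t` in `B` avoids
the neighbourhood of `S = L ∩ A`, so `t ≤ b - |N(S)| ≤ b - s b / a` by well-spreadness. The
payoff of `L` is therefore at most `c b + s (1 - c (a + b) / a)`, and `c (a + b) / a ≥ 1` is
the AM-GM inequality `(a + b)² ≥ 4ab`; so the payoff is at most `c b = n/4`.
-/

open Finset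

theorem one_div_four_mul_one_sub_div_add {a b : ℝ} (ha : 0 ≤ a) (hb : 0 < b) :
    1 / (4 * (1 - a / (a + b))) = (a + b) / (4 * b) := by
  rw [one_sub_div (by positivity), add_sub_cancel_left]
  field_simp

theorem quarter_le_add_div {a b : ℝ} (ha : 0 ≤ a) (hb : 0 < b) :
    1 / 4 ≤ (a + b) / (4 * b) := by
  rw [div_le_div_iff₀ (by norm_num) (by positivity)]
  linarith

theorem quarter_le_one_sub_add_div {a b : ℝ} (hab : a ≤ 2 * b) (hb : 0 < b) :
    1 / 4 ≤ 1 - (a + b) / (4 * b) := by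
  have : (a + b) / (4 * b) ≤ 3 / 4 := by
    rw [div_le_div_iff₀ (by positivity) (by norm_num)]
    linarith
  linarith

theorem mul_three_mul_sub_le_mul_add {a b s m : ℝ} (hb : 0 ≤ b) (hs : 0 ≤ s) (hm : 0 ≤ m)
    (hsa : s ≤ a) (hsm : s * b ≤ m * a) : s * (3 * b - a) ≤ m * (a + b) := by
  rcases (hs.trans hsa).eq_or_lt with rfl | ha
  · obtain rfl : s = 0 := le_antisymm hsa hs
    simpa using mul_nonneg hm hb
  · refine le_of_mul_le_mul_left ?_ ha
    nlinarith [mul_nonneg hs (sq_nonneg (a - b)),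
      mul_le_mul_of_nonneg_right hsm (by linarith : 0 ≤ a + b)]

theorem payoff_le_of_wellSpread {a b s t m : ℝ} (hb : 0 < b) (hs : 0 ≤ s) (hm : 0 ≤ m)
    (hsa : s ≤ a) (hsm : s * b ≤ m * a) (htm : t + m ≤ b) :
    s * (1 - (a + b) / (4 * b)) + t * ((a + b) / (4 * b)) ≤ (a + b) / 4 := by
  have hspread := mul_three_mul_sub_le_mul_add hb.le hs hm hsa hsm
  have hab : 0 ≤ a + b := by linarith
  field_simp
  nlinarith [mul_le_mul_of_nonneg_right htm hab]

theorem sum_ite_mem_const {V R : Type*} [Fintype V] [DecidableEq V] [NonAssocSemiring R]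
    (L A : Finset V) (x y : R) :
    ∑ v ∈ L, (if v ∈ A then x else y) = #(L ∩ A) * x + #(L ∩ Aᶜ) * y := by
  rw [sum_ite, sum_const, sum_const, filter_mem_eq_inter, filter_notMem_eq_sdiff,
    sdiff_eq_inter_compl, nsmul_eq_mul, nsmul_eq_mul]

theorem card_inter_add_card_filter_adj_le {V : Type*} [DecidableEq V] (G : SimpleGraph V)
    [DecidableRel G.Adj] {L S : Finset V} (hL : ∀ u ∈ L, ∀ v ∈ L, ¬ G.Adj u v) (hS : S ⊆ L)
    (B : Finset V) : #(L ∩ B) + #(B.filter (fun b => ∃ a ∈ S, G.Adj a b)) ≤ #B := by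
  rw [← card_union_of_disjoint]
  · exact card_le_card (union_subset inter_subset_right (filter_subset _ _))
  · rw [disjoint_left]
    rintro v hv hvN
    obtain ⟨a, haS, hav⟩ := (mem_filter.mp hvN).2
    exact hL a (hS haS) v (mem_inter.mp hv).1 hav

theorem wellSpread_modified_payoff_general {V : Type*} [Fintype V] [DecidableEq V]
    (G : SimpleGraph V) [DecidableRel G.Adj]
    (A B : Finset V) (hdisj : Disjoint A B) (hcover : A ∪ B = Finset.univ)
    (hbip : ∀ u v : V, G.Adj u v → (u ∈ A ∧ v ∈ B) ∨ (u ∈ B ∧ v ∈ A))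
    (hcard : A.card ≤ B.card)
    (hws : ∀ S ⊆ A, S.card * B.card ≤ (B.filter (fun b => ∃ a ∈ S, G.Adj a b)).card * A.card)
    (n : ℕ) (hn : n = A.card + B.card)
    (lam : ℝ) (hlam : lam = (A.card : ℝ) / n)
    (p : V → ℝ)
    (hp : ∀ v : V, p v = if v ∈ A then 1 - 1 / (4 * (1 - lam)) else 1 / (4 * (1 - lam))) :
    (∀ v : V, (1 : ℝ) / 4 ≤ p v) ∧
    (∀ u v : V, G.Adj u v → 1 ≤ p u + p v) ∧
    (∀ L : Finset V, (∀ u ∈ L, ∀ v ∈ L, ¬ G.Adj u v) → ∑ v ∈ L, p v ≤ (n : ℝ) / 4) := by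
  have hB : Aᶜ = B := (isCompl_iff.mpr ⟨hdisj, codisjoint_iff.mpr hcover⟩).compl_eq
  rcases B.eq_empty_or_nonempty with hB0 | hBne
  · obtain rfl : A = ∅ := card_eq_zero.mp (by simpa [hB0] using hcard)
    have : IsEmpty V := univ_eq_empty_iff.mp (by simp [← hcover, hB0])
    exact ⟨isEmptyElim, isEmptyElim, fun L _ => by simp [L.eq_empty_of_isEmpty, hn, hB0]⟩
  have hb : (0 : ℝ) < #B := by exact_mod_cast hBne.card_pos
  have hab : (#A : ℝ) ≤ #B := by exact_mod_cast hcard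
  subst hn hlam
  push_cast at hp ⊢
  rw [one_div_four_mul_one_sub_div_add (Nat.cast_nonneg _) hb] at hp
  refine ⟨fun v => ?_, fun u v huv => ?_, fun L hL => ?_⟩
  · rw [hp]
    split_ifs
    exacts [quarter_le_one_sub_add_div (by linarith) hb, quarter_le_add_div (by positivity) hb]
  · rcases hbip u v huv with ⟨hu, hv⟩ | ⟨hu, hv⟩
    · simp [hp, hu, disjoint_right.mp hdisj hv]
    · simp [hp, hv, disjoint_right.mp hdisj hu]
  · set N := B.filter (fun b => ∃ a ∈ L ∩ A, G.Adj a b)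
    have hspread : (#(L ∩ A) : ℝ) * #B ≤ #N * #A := by exact_mod_cast hws _ inter_subset_right
    have hNL : (#(L ∩ B) : ℝ) + #N ≤ #B := by
      exact_mod_cast card_inter_add_card_filter_adj_le G hL inter_subset_left B
    rw [sum_congr rfl fun v _ => hp v, sum_ite_mem_const, hB]
    exact payoff_le_of_wellSpread hb (by positivity) (by positivity)
      (by exact_mod_cast card_le_card inter_subset_right) hspread hNL

/-- For a well-spread bipartite graph, the payoff with value 1/(4(1−λ)) on B
and 1 − 1/(4(1−λ)) on A is at least 1/4 everywhere, satisfies all edges, and gives at most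
n/4 on every independent set. -/
theorem wellSpread_modified_payoff {V : Type*} [Fintype V] [DecidableEq V]
    (G : SimpleGraph V) [DecidableRel G.Adj]
    (A B : Finset V) (hdisj : Disjoint A B) (hcover : A ∪ B = Finset.univ)
    (hbip : ∀ u v : V, G.Adj u v → (u ∈ A ∧ v ∈ B) ∨ (u ∈ B ∧ v ∈ A))
    (hiso : ∀ v : V, ∃ u : V, G.Adj u v)
    (hcard : A.card ≤ B.card)
    (hws : ∀ S ⊆ A, S.card * B.card ≤ (B.filter (fun b => ∃ a ∈ S, G.Adj a b)).card * A.card)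
    (n : ℕ) (hn : n = A.card + B.card)
    (lam : ℝ) (hlam : lam = (A.card : ℝ) / n)
    (p : V → ℝ)
    (hp : ∀ v : V, p v = if v ∈ A then 1 - 1 / (4 * (1 - lam)) else 1 / (4 * (1 - lam))) :
    (∀ v : V, (1 : ℝ) / 4 ≤ p v) ∧
    (∀ u v : V, G.Adj u v → 1 ≤ p u + p v) ∧
    (∀ L : Finset V, (∀ u ∈ L, ∀ v ∈ L, ¬ G.Adj u v) → ∑ v ∈ L, p v ≤ (n : ℝ) / 4) :=
  wellSpread_modified_payoff_general G A B hdisj hcover hbip hcard hws n hn lam hlam p hp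
end
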